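/- Let f be a type function and S, T ∈ 𝓟_f^0 such that the greatest lower bound S∧T of S and T exists in the poset (𝓟_f, ⊆). Then S∧T ∈ 𝓟_f^0. -/
import Mathlib


open Classical

namespace HOT

/-- Binary strings of length `n`, identified with `{0,1}^n`. -/
abbrev Str (n : ℕ) := Fin n → Bool

/-- The all-zeros string `θ`. -/
def theta (n : ℕ) : Str n := fun _ => false

/-- `𝓕_n`: boolean functions on `{0,1}^n` with `f(θ) = 1`. -/
def Fcal (n : ℕ) : Set (Str n → Bool) := {f | f (theta n) = true}

/-- The complement `f* = 1 - f + p_n`. -/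
noncomputable def star {n : ℕ} (f : Str n → Bool) : Str n → Bool :=
  fun s => if s = theta n then true else !(f s)

/-- First block `s¹` of a string `s ∈ {0,1}^{m+n}`. -/
def fstStr {m n : ℕ} (s : Str (m + n)) : Str m := fun i => s (Fin.castAdd n i)

/-- Second block `s²` of a string `s ∈ {0,1}^{m+n}`. -/
def sndStr {m n : ℕ} (s : Str (m + n)) : Str n := fun j => s (Fin.natAdd m j)

/-- Tensor product `(f ⊗ g)(s) = f(s¹) · g(s²)`. -/
noncomputable def tensor {m n : ℕ} (f : Str m → Bool) (g : Str n → Bool) :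
    Str (m + n) → Bool :=
  fun s => f (fstStr s) && g (sndStr s)

/-- `f ⅋ g := (f* ⊗ g*)*`. -/
noncomputable def parr {m n : ℕ} (f : Str m → Bool) (g : Str n → Bool) :
    Str (m + n) → Bool :=
  star (tensor (star f) (star g))

/-- The causal product `f ◁ g` (`f` on the first `m` bits, `g` on the last `n` bits):
`(f ◁ g)(s) = f(s¹)` if `s¹ ≠ θ_m`, else `g(s²)`. -/
noncomputable def causalL {m n : ℕ} (f : Str m → Bool) (g : Str n → Bool) :
    Str (m + n) → Bool :=
  fun s => if fstStr s = theta m then g (sndStr s) else f (fstStr s)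

/-- The causal product `g ◁ f` (`f` on the first `m` bits, `g` on the last `n` bits):
`(g ◁ f)(s) = g(s²)` if `s² ≠ θ_n`, else `f(s¹)`. -/
noncomputable def causalR {m n : ℕ} (f : Str m → Bool) (g : Str n → Bool) :
    Str (m + n) → Bool :=
  fun s => if sndStr s = theta n then f (fstStr s) else g (sndStr s)

/-- `p_T(s) = 1` iff `s_i = 0` for all `i ∈ T`. -/
noncomputable def pSet {n : ℕ} (T : Set (Fin n)) : Str n → Bool :=
  fun s => decide (∀ i ∈ T, s i = false)

/-- The string `e^i` with `1` exactly in position `i`. -/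
def eStr {n : ℕ} (i : Fin n) : Str n := fun j => decide (j = i)

/-- The string `e^{i,j}` with `1` exactly in positions `i` and `j`. -/
def e2Str {n : ℕ} (i j : Fin n) : Str n := fun l => decide (l = i ∨ l = j)

/-- Input indices `I_f = {i : f(e^i) = 0}`. -/
def Iset {n : ℕ} (f : Str n → Bool) : Set (Fin n) := {i | f (eStr i) = false}

/-- Output indices `O_f = {j : f(e^j) = 1}`. -/
def Oset {n : ℕ} (f : Str n → Bool) : Set (Fin n) := {j | f (eStr j) = true}

/-- `f` is a subtype if `p_{I_f} ≤ f ≤ (p_{O_f})*` pointwise. -/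
def IsSubtype {n : ℕ} (f : Str n → Bool) : Prop :=
  pSet (Iset f) ≤ f ∧ f ≤ star (pSet (Oset f))

/-- The partial order `≤_O`: `s ≤_O t` iff `s_i ≤ t_i` for `i ∈ O` and `s_i ≥ t_i` for
`i ∉ O`. -/
def leO {n : ℕ} (O : Set (Fin n)) (s t : Str n) : Prop :=
  ∀ i, (i ∈ O → s i ≤ t i) ∧ (i ∉ O → t i ≤ s i)

/-- `f` is monotone (with respect to `≤_{O_f}`). -/
def MonotoneF {n : ℕ} (f : Str n → Bool) : Prop :=
  ∀ s t, leO (Oset f) s t → f s ≤ f t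

/-- The action of a permutation on strings: `σ(s)_i = s_{σ⁻¹(i)}`. -/
def permAct {n : ℕ} (σ : Equiv.Perm (Fin n)) (s : Str n) : Str n := fun i => s (σ⁻¹ i)

/-- `(f ∘ σ)(s) = f(σ(s))`. -/
def permComp {n : ℕ} (f : Str n → Bool) (σ : Equiv.Perm (Fin n)) : Str n → Bool :=
  fun s => f (permAct σ s)

/-- The inductively defined family `𝓣_n` of type functions. -/
inductive IsType : (n : ℕ) → (Str n → Bool) → Prop
  | one : IsType 1 (fun _ => true)
  | dual {n : ℕ} {f : Str n → Bool} : IsType n f → IsType n (star f)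
  | perm {n : ℕ} {f : Str n → Bool} (σ : Equiv.Perm (Fin n)) :
      IsType n f → IsType n (permComp f σ)
  | tens {m n : ℕ} {f : Str m → Bool} {g : Str n → Bool} :
      IsType m f → IsType n g → IsType (m + n) (tensor f g)

/-- Interpretation of a bit as an integer. -/
def toZ (b : Bool) : ℤ := (b.toNat : ℤ)

/-- `f` is a chain type: `f = Σ_{i=0}^N (-1)^i p_{S_i}` for a strictly increasing chain
`S_0 ⊊ ⋯ ⊊ S_N ⊆ [n]` with `N` even. -/
def IsChainType {n : ℕ} (f : Str n → Bool) : Prop :=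
  ∃ N : ℕ, Even N ∧ ∃ S : Fin (N + 1) → Set (Fin n), StrictMono S ∧
    ∀ s : Str n, toZ (f s) = ∑ i : Fin (N + 1), (-1 : ℤ) ^ (i : ℕ) * toZ (pSet (S i) s)

/-- The Möbius transform `f̂_T`. -/
noncomputable def mobius {n : ℕ} (f : Str n → Bool) (T : Set (Fin n)) : ℤ :=
  ∑ s : Str n, if ∀ j, j ∉ T → s j = true then
    (-1 : ℤ) ^ (∑ j : Fin n, if j ∈ T then (s j).toNat else 0) * toZ (f s)
  else 0

/-- The structure poset `𝓟_f = {T ⊆ [n] : f̂_T ≠ 0}`, ordered by inclusion. -/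
noncomputable def structPoset {n : ℕ} (f : Str n → Bool) : Set (Set (Fin n)) :=
  {T | mobius f T ≠ 0}

/-- The label set `L_T = T ∖ ⋃ {S ∈ 𝓟_f : S ⊊ T}`. -/
noncomputable def labels {n : ℕ} (f : Str n → Bool) (T : Set (Fin n)) : Set (Fin n) :=
  T \ ⋃₀ {S | S ∈ structPoset f ∧ S ⊂ T}

/-- The reduced structure poset `𝓟_f^0`: `∅` (if `∅ ∈ 𝓟_f`) together with all
`T ∈ 𝓟_f` with `L_T ≠ ∅`. -/
noncomputable def reducedPoset {n : ℕ} (f : Str n → Bool) : Set (Set (Fin n)) :=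
  {T | T ∈ structPoset f ∧ (T = ∅ ∨ labels f T ≠ ∅)}

/-- The rank `ρ_f(T)`: the length of a longest chain in `𝓟_f` with top element `T`
(this is the length of any maximal such chain in the graded poset `𝓟_f`). -/
noncomputable def rank {n : ℕ} (f : Str n → Bool) (T : Set (Fin n)) : ℕ :=
  sSup {k | ∃ c : Fin (k + 1) → Set (Fin n), StrictMono c ∧
    (∀ i, c i ∈ structPoset f) ∧ c (Fin.last k) = T}

/-- The rank `r(f)` of the whole poset `𝓟_f`: the common length of its maximal chains. -/
noncomputable def rk {n : ℕ} (f : Str n → Bool) : ℕ :=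
  sSup {k | ∃ c : Fin (k + 1) → Set (Fin n), StrictMono c ∧ ∀ i, c i ∈ structPoset f}

/-- `𝕋_i^f = {T ∈ 𝓟_f : i ∈ L_T}`. -/
noncomputable def Tset {n : ℕ} (f : Str n → Bool) (i : Fin n) : Set (Set (Fin n)) :=
  {T | T ∈ structPoset f ∧ i ∈ labels f T}

/-- The rank `r_f(i)` of an index: the common rank of elements of `𝕋_i^f`, or `r(f)+1`
if `𝕋_i^f = ∅` (a free output). -/
noncomputable def idxRank {n : ℕ} (f : Str n → Bool) (i : Fin n) : ℕ :=
  if (Tset f i).Nonempty then sSup (rank f '' Tset f i) else rk f + 1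

/-- `X` is the greatest lower bound of `S` and `T` in the poset `(P, ⊆)`. -/
def IsGLBIn {n : ℕ} (P : Set (Set (Fin n))) (S T X : Set (Fin n)) : Prop :=
  X ∈ P ∧ X ⊆ S ∧ X ⊆ T ∧ ∀ Y ∈ P, Y ⊆ S → Y ⊆ T → Y ⊆ X

/-- `X` is the least upper bound of `S` and `T` in the poset `(P, ⊆)`. -/
def IsLUBIn {n : ℕ} (P : Set (Set (Fin n))) (S T X : Set (Fin n)) : Prop :=
  X ∈ P ∧ S ⊆ X ∧ T ⊆ X ∧ ∀ Y ∈ P, S ⊆ Y → T ⊆ Y → X ⊆ Y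

/-- `S^↓`: the downset generated by `S` in `𝓟_f^0`. -/
noncomputable def downSet {n : ℕ} (f : Str n → Bool) (S : Set (Fin n)) :
    Set (Set (Fin n)) :=
  {X | X ∈ reducedPoset f ∧ X ⊆ S}

/-- `S^↑`: the upset generated by `S` in `𝓟_f^0`. -/
noncomputable def upSet {n : ℕ} (f : Str n → Bool) (S : Set (Fin n)) :
    Set (Set (Fin n)) :=
  {X | X ∈ reducedPoset f ∧ S ⊆ X}

/-- The pair rank `r_f(i,j)`: `max{ρ_f(S ∧ T) : S ∈ 𝕋_i^f, T ∈ 𝕋_j^f, S ∧ T exists in 𝓟_f}`;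
`-1` if this set is empty, unless `i` or `j` is a free output, in which case it is
`min{r_f(i), r_f(j)}`. -/
noncomputable def pairRank {n : ℕ} (f : Str n → Bool) (i j : Fin n) : ℤ :=
  if _h : ∃ r : ℤ, ∃ S ∈ Tset f i, ∃ T ∈ Tset f j, ∃ X, IsGLBIn (structPoset f) S T X ∧
      r = (rank f X : ℤ) then
    sSup {r : ℤ | ∃ S ∈ Tset f i, ∃ T ∈ Tset f j, ∃ X, IsGLBIn (structPoset f) S T X ∧
      r = (rank f X : ℤ)}
  else if Tset f i = ∅ ∨ Tset f j = ∅ then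
    min (idxRank f i : ℤ) (idxRank f j : ℤ)
  else -1

/-- Membership in the sublattice generated by a set `S`. -/
inductive InLatGen {α : Type*} [Lattice α] (S : Set α) : α → Prop
  | base {a : α} : a ∈ S → InLatGen S a
  | sup {a b : α} : InLatGen S a → InLatGen S b → InLatGen S (a ⊔ b)
  | inf {a b : α} : InLatGen S a → InLatGen S b → InLatGen S (a ⊓ b)

/-- For `s ≰_O θ`, `f_s` is the function with support `U_s ∪ U_θ` (w.r.t. `≤_O`). -/
noncomputable def fStr {n : ℕ} (O : Set (Fin n)) (s : Str n) : Str n → Bool :=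
  fun t => decide (leO O s t ∨ leO O (theta n) t)

/-- A string `s ∉ D_θ ∪ U_θ` is basic (for `≤_O`) if `s_j = 1` for exactly one `j ∈ O`
and `s_i = 0` for at most one `i ∈ I = Oᶜ`. -/
def IsBasic {n : ℕ} (O : Set (Fin n)) (s : Str n) : Prop :=
  ¬ leO O s (theta n) ∧ ¬ leO O (theta n) s ∧
  (∃! j, j ∈ O ∧ s j = true) ∧
  (∀ i i', i ∈ Oᶜ → i' ∈ Oᶜ → s i = false → s i' = false → i = i')


/- ### Auxiliary development for Statement 18 -/

lemma wt_update {n : ℕ} (T : Set (Fin n)) (s : Str n) (j₀ : Fin n) (hj : j₀ ∈ T) (b : Bool) :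
    (∑ j : Fin n, if j ∈ T then ((Function.update s j₀ b) j).toNat else 0)
    = b.toNat + ∑ j ∈ Finset.univ.erase j₀, (if j ∈ T then (s j).toNat else 0) := by
  classical
  rw [← Finset.add_sum_erase _ _ (Finset.mem_univ j₀)]
  simp only [Function.update_self, if_pos hj]
  congr 1
  apply Finset.sum_congr rfl
  intro j hjmem
  rw [Function.update_of_ne (Finset.ne_of_mem_erase hjmem)]

lemma mobius_one {n : ℕ} (T : Set (Fin n)) :
    mobius (fun _ => true) T = if T = ∅ then 1 else 0 := by
  classical
  unfold mobius
  split_ifs with hT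
  · subst hT
    rw [Finset.sum_eq_single (fun _ => true)]
    · simp [toZ]
    · intro s _ hs
      rw [if_neg]
      intro h
      exact hs (funext fun j => h j (Set.notMem_empty j))
    · intro h; exact absurd (Finset.mem_univ _) h
  · obtain ⟨j₀, hj₀⟩ := Set.nonempty_iff_ne_empty.mpr hT
    apply Finset.sum_ninvolution (fun s => Function.update s j₀ (!(s j₀)))
    · intro s
      by_cases hc : ∀ j, j ∉ T → s j = true
      · have hc' : ∀ j, j ∉ T → (Function.update s j₀ (!(s j₀))) j = true := by
          intro j hjT
          rw [Function.update_of_ne (by rintro rfl; exact hjT hj₀)]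
          exact hc j hjT
        rw [if_pos hc, if_pos hc', wt_update T s j₀ hj₀]
        have : (∑ j : Fin n, if j ∈ T then (s j).toNat else 0)
            = (s j₀).toNat + ∑ j ∈ Finset.univ.erase j₀, (if j ∈ T then (s j).toNat else 0) := by
          rw [← Finset.add_sum_erase _ _ (Finset.mem_univ j₀), if_pos hj₀]
        rw [this]
        cases h : s j₀ <;> simp [pow_add, pow_succ, toZ]
      · have hc' : ¬ ∀ j, j ∉ T → (Function.update s j₀ (!(s j₀))) j = true := by
          intro h; apply hc; intro j hjT
          have := h j hjT
          rwa [Function.update_of_ne (by rintro rfl; exact hjT hj₀)] at this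
        rw [if_neg hc, if_neg hc']; ring
    · intro s _
      intro h
      have := congrFun h j₀
      simp at this
    · intro _; exact Finset.mem_univ _
    · intro s
      funext j
      by_cases hj : j = j₀
      · subst hj; simp
      · rw [Function.update_of_ne hj, Function.update_of_ne hj]

lemma mobius_theta_term {n : ℕ} (T : Set (Fin n)) :
    (∑ s : Str n, if ∀ j, j ∉ T → s j = true then
      (-1 : ℤ) ^ (∑ j : Fin n, if j ∈ T then (s j).toNat else 0) *
        (if s = theta n then 1 else 0) else 0) = if T = Set.univ then 1 else 0 := by
  classical
  rw [Finset.sum_eq_single (theta n)]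
  · by_cases hT : T = Set.univ
    · subst hT
      rw [if_pos (by intro j hj; exact absurd (Set.mem_univ j) hj)]
      simp [theta]
    · rw [if_neg hT, if_neg]
      intro h
      apply hT
      ext j; simp only [Set.mem_univ, iff_true]
      by_contra hj
      exact absurd (h j hj) (by simp [theta])
  · intro s _ hs
    simp only [if_neg hs, mul_zero, ite_self]

  · intro h; exact absurd (Finset.mem_univ _) h

/-- The equivalence between `Str (m+n)` and `Str m × Str n`. -/
def strEquiv (m n : ℕ) : Str (m + n) ≃ Str m × Str n where
  toFun s := (fstStr s, sndStr s)
  invFun p := fun j => Fin.addCases (fun i => p.1 i) (fun i => p.2 i) j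
  left_inv s := by
    funext j
    refine Fin.addCases (fun i => ?_) (fun i => ?_) j
    · simp [fstStr]
    · simp [sndStr]
  right_inv p := by
    ext i
    · simp [fstStr]
    · simp [sndStr]

lemma toZ_and (a b : Bool) : toZ (a && b) = toZ a * toZ b := by
  cases a <;> cases b <;> simp [toZ]

lemma mobius_tensor {m n : ℕ} (f : Str m → Bool) (g : Str n → Bool)
    (T : Set (Fin (m + n))) :
    mobius (tensor f g) T
      = mobius f (Fin.castAdd n ⁻¹' T) * mobius g (Fin.natAdd m ⁻¹' T) := by
  classical
  unfold mobius
  rw [Finset.sum_mul_sum]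
  rw [← Equiv.sum_comp (strEquiv m n).symm
    (fun s => if ∀ j, j ∉ T → s j = true then
      (-1 : ℤ) ^ (∑ j, if j ∈ T then (s j).toNat else 0) * toZ (tensor f g s) else 0)]
  rw [Fintype.sum_prod_type]
  apply Finset.sum_congr rfl
  intro a _
  apply Finset.sum_congr rfl
  intro b _
  set s := (strEquiv m n).symm (a, b) with hs
  have hca : ∀ i : Fin m, s (Fin.castAdd n i) = a i := by
    intro i; simp [hs, strEquiv]
  have hcb : ∀ i : Fin n, s (Fin.natAdd m i) = b i := by
    intro i; simp [hs, strEquiv]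
  have hfst : fstStr s = a := funext hca
  have hsnd : sndStr s = b := funext hcb
  have hcond : (∀ j, j ∉ T → s j = true)
      ↔ ((∀ i, i ∉ Fin.castAdd n ⁻¹' T → a i = true)
        ∧ (∀ i, i ∉ Fin.natAdd m ⁻¹' T → b i = true)) := by
    constructor
    · intro h
      exact ⟨fun i hi => by rw [← hca]; exact h _ hi,
             fun i hi => by rw [← hcb]; exact h _ hi⟩
    · intro ⟨h1, h2⟩ j hj
      refine Fin.addCases (fun i hi => ?_) (fun i hi => ?_) j hj
      · rw [hca]; exact h1 i hi
      · rw [hcb]; exact h2 i hi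
  have hsign : (∑ j, if j ∈ T then (s j).toNat else 0)
      = (∑ i : Fin m, if i ∈ Fin.castAdd n ⁻¹' T then (a i).toNat else 0)
        + (∑ i : Fin n, if i ∈ Fin.natAdd m ⁻¹' T then (b i).toNat else 0) := by
    rw [Fin.sum_univ_add]
    congr 1
    · apply Finset.sum_congr rfl; intro i _; rw [hca]; rfl
    · apply Finset.sum_congr rfl; intro i _; rw [hcb]; rfl
  have hval : toZ (tensor f g s) = toZ (f a) * toZ (g b) := by
    rw [tensor, toZ_and, hfst, hsnd]
  by_cases h : ∀ j, j ∉ T → s j = true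
  · rw [if_pos h, if_pos (hcond.mp h).1, if_pos (hcond.mp h).2, hsign, hval, pow_add]
    ring
  · rw [if_neg h]
    rcases not_and_or.mp (fun hc => h (hcond.mpr hc)) with h1 | h1
    · rw [if_neg h1, zero_mul]
    · rw [if_neg h1, mul_zero]

lemma mobius_star {n : ℕ} {f : Str n → Bool} (hθ : f (theta n) = true) (T : Set (Fin n)) :
    mobius (star f) T
    = (if T = ∅ then 1 else 0) + (if T = Set.univ then 1 else 0) - mobius f T := by
  classical
  have hz : ∀ s : Str n, toZ (star f s) = 1 + (if s = theta n then (1:ℤ) else 0) - toZ (f s) := by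
    intro s
    by_cases hs : s = theta n
    · subst hs; simp [star, toZ, hθ]
    · simp only [star, if_neg hs]
      cases h : f s <;> simp [toZ, h]
  have key : ∀ s : Str n,
      (if ∀ j, j ∉ T → s j = true then
        (-1 : ℤ) ^ (∑ j : Fin n, if j ∈ T then (s j).toNat else 0) * toZ (star f s) else 0)
      = ((if ∀ j, j ∉ T → s j = true then
          (-1 : ℤ) ^ (∑ j : Fin n, if j ∈ T then (s j).toNat else 0) * toZ true else 0)
        + (if ∀ j, j ∉ T → s j = true then
          (-1 : ℤ) ^ (∑ j : Fin n, if j ∈ T then (s j).toNat else 0) *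
            (if s = theta n then 1 else 0) else 0))
        - (if ∀ j, j ∉ T → s j = true then
          (-1 : ℤ) ^ (∑ j : Fin n, if j ∈ T then (s j).toNat else 0) * toZ (f s) else 0) := by
    intro s
    by_cases h : ∀ j, j ∉ T → s j = true
    · simp only [if_pos h, hz s]; split_ifs <;> simp [toZ] <;> ring
    · simp [h]
  have hsum : mobius (star f) T
      = (mobius (fun _ => true) T
        + ∑ s : Str n, (if ∀ j, j ∉ T → s j = true then
          (-1 : ℤ) ^ (∑ j : Fin n, if j ∈ T then (s j).toNat else 0) *
            (if s = theta n then 1 else 0) else 0))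
        - mobius f T := by
    unfold mobius
    rw [Finset.sum_congr rfl (fun s _ => key s), Finset.sum_sub_distrib,
      Finset.sum_add_distrib]
  rw [hsum, mobius_theta_term, mobius_one]

lemma mobius_perm {n : ℕ} (f : Str n → Bool) (σ : Equiv.Perm (Fin n)) (T : Set (Fin n)) :
    mobius (permComp f σ) T = mobius f (⇑σ '' T) := by
  classical
  unfold mobius permComp
  apply Fintype.sum_equiv (Equiv.arrowCongr σ (Equiv.refl Bool))
  intro s
  have hes : ∀ i, (Equiv.arrowCongr σ (Equiv.refl Bool) s) i = s (σ.symm i) := by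
    intro i; simp [Equiv.arrowCongr]
  have hcond : (∀ j, j ∉ T → s j = true)
      ↔ (∀ i, i ∉ ⇑σ '' T → (Equiv.arrowCongr σ (Equiv.refl Bool) s) i = true) := by
    constructor
    · intro h i hi
      rw [hes]
      apply h
      intro hmem
      exact hi ⟨σ.symm i, hmem, by simp⟩
    · intro h j hj
      have := h (σ j) (by
        intro ⟨j', hj', he⟩
        exact hj (by rwa [σ.injective he] at hj'))
      rwa [hes, Equiv.symm_apply_apply] at this
  have hsign : (∑ j : Fin n, if j ∈ T then (s j).toNat else 0)
      = ∑ i : Fin n, if i ∈ ⇑σ '' T then ((Equiv.arrowCongr σ (Equiv.refl Bool) s) i).toNat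
          else 0 := by
    apply Fintype.sum_equiv σ
    intro j
    have : σ j ∈ ⇑σ '' T ↔ j ∈ T := by
      constructor
      · intro ⟨j', hj', he⟩; rwa [σ.injective he] at hj'
      · intro h; exact ⟨j, h, rfl⟩
    rw [hes, Equiv.symm_apply_apply]
    simp [this]
  have hval : f (permAct σ s) = f (Equiv.arrowCongr σ (Equiv.refl Bool) s) := by
    congr 1
  by_cases h : ∀ j, j ∉ T → s j = true
  · rw [if_pos h, if_pos (hcond.mp h), hsign, hval]
  · rw [if_neg h, if_neg (fun h' => h (hcond.mpr h'))]

def GLBClosed {n : ℕ} (f : Str n → Bool) : Prop :=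
  ∀ S T X : Set (Fin n), S ∈ reducedPoset f → T ∈ reducedPoset f →
    IsGLBIn (structPoset f) S T X → X ∈ reducedPoset f

/- ### star -/

lemma structPoset_star_iff {n : ℕ} {f : Str n → Bool} (hθ : f (theta n) = true)
    {T : Set (Fin n)} (h1 : T ≠ ∅) (h2 : T ≠ Set.univ) :
    T ∈ structPoset (star f) ↔ T ∈ structPoset f := by
  unfold structPoset
  rw [Set.mem_setOf_eq, Set.mem_setOf_eq, mobius_star hθ, if_neg h1, if_neg h2]
  simp

lemma labels_star {n : ℕ} {f : Str n → Bool} (hθ : f (theta n) = true) (T : Set (Fin n)) :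
    labels (star f) T = labels f T := by
  unfold labels
  congr 1
  ext i
  simp only [Set.mem_sUnion, Set.mem_setOf_eq]
  constructor
  · rintro ⟨S, ⟨hSP, hST⟩, hiS⟩
    have h1 : S ≠ ∅ := fun h => by subst h; exact hiS
    have h2 : S ≠ Set.univ := fun h => hST.2 (by rw [h]; exact Set.subset_univ T)
    exact ⟨S, ⟨(structPoset_star_iff hθ h1 h2).mp hSP, hST⟩, hiS⟩
  · rintro ⟨S, ⟨hSP, hST⟩, hiS⟩
    have h1 : S ≠ ∅ := fun h => by subst h; exact hiS
    have h2 : S ≠ Set.univ := fun h => hST.2 (by rw [h]; exact Set.subset_univ T)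
    exact ⟨S, ⟨(structPoset_star_iff hθ h1 h2).mpr hSP, hST⟩, hiS⟩

lemma reduced_star_iff {n : ℕ} {f : Str n → Bool} (hθ : f (theta n) = true)
    {T : Set (Fin n)} (h1 : T ≠ ∅) (h2 : T ≠ Set.univ) :
    T ∈ reducedPoset (star f) ↔ T ∈ reducedPoset f := by
  unfold reducedPoset
  rw [Set.mem_setOf_eq, Set.mem_setOf_eq, labels_star hθ, structPoset_star_iff hθ h1 h2]

lemma glbclosed_star {n : ℕ} {f : Str n → Bool} (hθ : f (theta n) = true)
    (IH : GLBClosed f) : GLBClosed (star f) := by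
  intro S T X hS hT hX
  obtain ⟨hXP, hXS, hXT, hmax⟩ := hX
  by_cases hX0 : X = ∅
  · exact ⟨hXP, Or.inl hX0⟩
  by_cases hXu : X = Set.univ
  · have hSu : S = Set.univ := Set.eq_univ_of_univ_subset (hXu ▸ hXS)
    have : X = S := by rw [hXu, hSu]
    exact this ▸ hS
  by_cases hS0 : S = ∅
  · exact absurd (Set.subset_eq_empty hXS hS0) hX0
  by_cases hT0 : T = ∅
  · exact absurd (Set.subset_eq_empty hXT hT0) hX0
  by_cases hSu : S = Set.univ
  · have hTX : T ⊆ X := hmax T hT.1 (hSu ▸ Set.subset_univ T) subset_rfl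
    have : X = T := Set.Subset.antisymm hXT hTX
    exact this ▸ hT
  by_cases hTu : T = Set.univ
  · have hSX : S ⊆ X := hmax S hS.1 subset_rfl (hTu ▸ Set.subset_univ S)
    have : X = S := Set.Subset.antisymm hXS hSX
    exact this ▸ hS
  have hS' : S ∈ reducedPoset f := (reduced_star_iff hθ hS0 hSu).mp hS
  have hT' : T ∈ reducedPoset f := (reduced_star_iff hθ hT0 hTu).mp hT
  have hX' : IsGLBIn (structPoset f) S T X := by
    refine ⟨(structPoset_star_iff hθ hX0 hXu).mp hXP, hXS, hXT, ?_⟩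
    intro Y hY hYS hYT
    by_cases hY0 : Y = ∅
    · subst hY0; exact Set.empty_subset X
    by_cases hYu : Y = Set.univ
    · exact absurd (Set.eq_univ_of_univ_subset (hYu ▸ hYS)) hSu
    · exact hmax Y ((structPoset_star_iff hθ hY0 hYu).mpr hY) hYS hYT
  exact (reduced_star_iff hθ hX0 hXu).mpr (IH S T X hS' hT' hX')

/- ### perm -/

lemma structPoset_perm_iff {n : ℕ} {f : Str n → Bool} {σ : Equiv.Perm (Fin n)}
    {T : Set (Fin n)} : T ∈ structPoset (permComp f σ) ↔ ⇑σ '' T ∈ structPoset f := by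
  unfold structPoset
  rw [Set.mem_setOf_eq, Set.mem_setOf_eq, mobius_perm]

lemma image_ssubset_iff {n : ℕ} {σ : Equiv.Perm (Fin n)} {A B : Set (Fin n)} :
    ⇑σ '' A ⊂ ⇑σ '' B ↔ A ⊂ B := by
  rw [Set.ssubset_def, Set.ssubset_def,
    Set.image_subset_image_iff σ.injective, Set.image_subset_image_iff σ.injective]

lemma mem_labels_perm {n : ℕ} {f : Str n → Bool} {σ : Equiv.Perm (Fin n)}
    {T : Set (Fin n)} {i : Fin n} :
    i ∈ labels (permComp f σ) T ↔ σ i ∈ labels f (⇑σ '' T) := by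
  unfold labels
  simp only [Set.mem_diff, Set.mem_sUnion, Set.mem_setOf_eq]
  constructor
  · rintro ⟨hiT, hn⟩
    refine ⟨⟨i, hiT, rfl⟩, ?_⟩
    rintro ⟨U, ⟨hUP, hUT⟩, hiU⟩
    apply hn
    have hΦ : ⇑σ '' (⇑σ ⁻¹' U) = U := Set.image_preimage_eq U σ.surjective
    refine ⟨⇑σ ⁻¹' U, ⟨?_, ?_⟩, hiU⟩
    · exact structPoset_perm_iff.mpr (by rw [hΦ]; exact hUP)
    · rw [← image_ssubset_iff (σ := σ), hΦ]; exact hUT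
  · rintro ⟨_, hn⟩
    have hiT : i ∈ T := by
      rcases ‹∃ x ∈ T, σ x = σ i› with ⟨x, hx, he⟩
      rwa [σ.injective he] at hx
    refine ⟨hiT, ?_⟩
    rintro ⟨A, ⟨hAP, hAT⟩, hiA⟩
    exact hn ⟨⇑σ '' A, ⟨structPoset_perm_iff.mp hAP, image_ssubset_iff.mpr hAT⟩,
      ⟨i, hiA, rfl⟩⟩

lemma reduced_perm_iff {n : ℕ} {f : Str n → Bool} {σ : Equiv.Perm (Fin n)}
    {T : Set (Fin n)} :
    T ∈ reducedPoset (permComp f σ) ↔ ⇑σ '' T ∈ reducedPoset f := by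
  unfold reducedPoset
  rw [Set.mem_setOf_eq, Set.mem_setOf_eq, structPoset_perm_iff]
  apply and_congr Iff.rfl
  apply or_congr
  · rw [Set.image_eq_empty]
  · rw [not_iff_not, ← Set.not_nonempty_iff_eq_empty, ← Set.not_nonempty_iff_eq_empty,
      not_iff_not]
    constructor
    · rintro ⟨i, hi⟩; exact ⟨σ i, mem_labels_perm.mp hi⟩
    · rintro ⟨j, hj⟩
      exact ⟨σ.symm j, mem_labels_perm.mpr (by rwa [Equiv.apply_symm_apply])⟩

lemma glbclosed_perm {n : ℕ} {f : Str n → Bool} (σ : Equiv.Perm (Fin n))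
    (IH : GLBClosed f) : GLBClosed (permComp f σ) := by
  intro S T X hS hT hX
  rw [reduced_perm_iff]
  apply IH (⇑σ '' S) (⇑σ '' T) (⇑σ '' X) (reduced_perm_iff.mp hS) (reduced_perm_iff.mp hT)
  obtain ⟨hXP, hXS, hXT, hmax⟩ := hX
  refine ⟨structPoset_perm_iff.mp hXP, Set.image_mono hXS, Set.image_mono hXT, ?_⟩
  intro Y hYP hYS hYT
  have hΦ : ⇑σ '' (⇑σ ⁻¹' Y) = Y := Set.image_preimage_eq Y σ.surjective
  have hA : ⇑σ ⁻¹' Y ∈ structPoset (permComp f σ) := structPoset_perm_iff.mpr (by rw [hΦ]; exact hYP)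
  have hAS : ⇑σ ⁻¹' Y ⊆ S := by
    rw [← Set.image_subset_image_iff σ.injective, hΦ]; exact hYS
  have hAT : ⇑σ ⁻¹' Y ⊆ T := by
    rw [← Set.image_subset_image_iff σ.injective, hΦ]; exact hYT
  have := hmax _ hA hAS hAT
  calc Y = ⇑σ '' (⇑σ ⁻¹' Y) := hΦ.symm
    _ ⊆ ⇑σ '' X := Set.image_mono this

section Tensor
variable {m n : ℕ}

/-- First component of a subset of `Fin (m+n)`. -/
def pre1 (T : Set (Fin (m + n))) : Set (Fin m) := Fin.castAdd n ⁻¹' T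
/-- Second component. -/
def pre2 (T : Set (Fin (m + n))) : Set (Fin n) := Fin.natAdd m ⁻¹' T
/-- Recombination. -/
def joinS (A : Set (Fin m)) (B : Set (Fin n)) : Set (Fin (m + n)) :=
  Fin.castAdd n '' A ∪ Fin.natAdd m '' B

lemma castAdd_ne_natAdd (i : Fin m) (j : Fin n) :
    (Fin.castAdd n i : Fin (m + n)) ≠ Fin.natAdd m j := by
  intro h
  have := congrArg Fin.val h
  simp [Fin.castAdd, Fin.natAdd] at this
  omega

lemma fin_cases (j : Fin (m + n)) :
    (∃ i, j = Fin.castAdd n i) ∨ (∃ i, j = Fin.natAdd m i) :=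
  Fin.addCases (fun i => Or.inl ⟨i, rfl⟩) (fun i => Or.inr ⟨i, rfl⟩) j

lemma pre1_join (A : Set (Fin m)) (B : Set (Fin n)) : pre1 (joinS A B) = A := by
  ext i
  simp only [pre1, joinS, Set.mem_preimage, Set.mem_union, Set.mem_image]
  constructor
  · rintro (⟨a, ha, he⟩ | ⟨b, hb, he⟩)
    · rwa [← Fin.castAdd_injective m n he]
    · exact absurd he.symm (castAdd_ne_natAdd i b)
  · intro h; exact Or.inl ⟨i, h, rfl⟩

lemma pre2_join (A : Set (Fin m)) (B : Set (Fin n)) : pre2 (joinS A B) = B := by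
  ext i
  simp only [pre2, joinS, Set.mem_preimage, Set.mem_union, Set.mem_image]
  constructor
  · rintro (⟨a, ha, he⟩ | ⟨b, hb, he⟩)
    · exact absurd he (castAdd_ne_natAdd a i)
    · have hv : b = i := Fin.ext (by have := congrArg Fin.val he; simpa using this)
      exact hv ▸ hb
  · intro h; exact Or.inr ⟨i, h, rfl⟩

lemma join_pre (T : Set (Fin (m + n))) : joinS (pre1 T) (pre2 T) = T := by
  ext j
  simp only [joinS, pre1, pre2, Set.mem_union, Set.mem_image, Set.mem_preimage]
  constructor
  · rintro (⟨a, ha, he⟩ | ⟨b, hb, he⟩) <;> (subst he; assumption)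
  · intro hj
    rcases fin_cases j with ⟨i, rfl⟩ | ⟨i, rfl⟩
    · exact Or.inl ⟨i, hj, rfl⟩
    · exact Or.inr ⟨i, hj, rfl⟩

lemma subset_iff_pre {T T' : Set (Fin (m + n))} :
    T ⊆ T' ↔ pre1 T ⊆ pre1 T' ∧ pre2 T ⊆ pre2 T' := by
  constructor
  · intro h
    exact ⟨fun i hi => h hi, fun i hi => h hi⟩
  · rintro ⟨h1, h2⟩ j hj
    rcases fin_cases j with ⟨i, rfl⟩ | ⟨i, rfl⟩
    · exact h1 hj
    · exact h2 hj

lemma eq_iff_pre {T T' : Set (Fin (m + n))} :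
    T = T' ↔ pre1 T = pre1 T' ∧ pre2 T = pre2 T' := by
  constructor
  · rintro rfl; exact ⟨rfl, rfl⟩
  · rintro ⟨h1, h2⟩
    apply Set.Subset.antisymm
    · exact subset_iff_pre.mpr ⟨h1.le, h2.le⟩
    · exact subset_iff_pre.mpr ⟨h1.ge, h2.ge⟩

variable {f : Str m → Bool} {g : Str n → Bool}

lemma mem_structPoset_tensor {T : Set (Fin (m + n))} :
    T ∈ structPoset (tensor f g) ↔ pre1 T ∈ structPoset f ∧ pre2 T ∈ structPoset g := by
  unfold structPoset
  rw [Set.mem_setOf_eq, Set.mem_setOf_eq, Set.mem_setOf_eq, mobius_tensor, mul_ne_zero_iff]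
  exact Iff.rfl

/-- `A` is minimal w.r.t. a family `P`: no member of `P` is strictly below it. -/
def MinIn {k : ℕ} (P : Set (Set (Fin k))) (A : Set (Fin k)) : Prop :=
  ∀ C ∈ P, ¬ C ⊂ A

lemma empty_minIn {k : ℕ} (P : Set (Set (Fin k))) : MinIn P ∅ :=
  fun C _ hC => hC.2 (Set.empty_subset C)

lemma minIn_labels_eq {k : ℕ} {h : Str k → Bool} {A : Set (Fin k)}
    (hA : MinIn (structPoset h) A) : labels h A = A := by
  unfold labels
  ext i
  simp only [Set.mem_diff, Set.mem_sUnion, Set.mem_setOf_eq]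
  constructor
  · exact fun h => h.1
  · intro hi
    refine ⟨hi, ?_⟩
    rintro ⟨S, ⟨hSP, hSA⟩, _⟩
    exact hA S hSP hSA

lemma minIn_reduced {k : ℕ} {h : Str k → Bool} {A : Set (Fin k)}
    (hP : A ∈ structPoset h) (hA : MinIn (structPoset h) A) : A ∈ reducedPoset h := by
  refine ⟨hP, ?_⟩
  by_cases h0 : A = ∅
  · exact Or.inl h0
  · exact Or.inr (by rw [minIn_labels_eq hA]; exact h0)

/-- Part (a): components of a reduced element are reduced, and one side is minimal. -/
lemma tensor_reduced_decompose {S : Set (Fin (m + n))}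
    (hS : S ∈ reducedPoset (tensor f g)) :
    pre1 S ∈ reducedPoset f ∧ pre2 S ∈ reducedPoset g ∧
      (MinIn (structPoset f) (pre1 S) ∨ MinIn (structPoset g) (pre2 S)) := by
  obtain ⟨hSP, hSalt⟩ := hS
  obtain ⟨hP1, hP2⟩ := mem_structPoset_tensor.mp hSP
  rcases hSalt with h0 | hL
  · have h1 : pre1 S = ∅ := by rw [h0]; rfl
    have h2 : pre2 S = ∅ := by rw [h0]; rfl
    rw [h1, h2]
    exact ⟨⟨h1 ▸ hP1, Or.inl rfl⟩, ⟨h2 ▸ hP2, Or.inl rfl⟩,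
      Or.inl (empty_minIn _)⟩
  · obtain ⟨i, hi⟩ := Set.nonempty_iff_ne_empty.mpr hL
    obtain ⟨hiS, hicov⟩ := hi
    rcases fin_cases i with ⟨i₀, rfl⟩ | ⟨i₀, rfl⟩
    · -- label in block 1 : pre2 S minimal
      have hmin2 : MinIn (structPoset g) (pre2 S) := by
        intro D hD hDS
        apply hicov
        refine ⟨joinS (pre1 S) D, ⟨?_, ?_⟩, ?_⟩
        · exact mem_structPoset_tensor.mpr ⟨by rw [pre1_join]; exact hP1,
            by rw [pre2_join]; exact hD⟩
        · constructor
          · exact subset_iff_pre.mpr ⟨by rw [pre1_join], by rw [pre2_join]; exact hDS.1⟩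
          · intro hc
            have := (subset_iff_pre.mp hc).2
            rw [pre2_join] at this
            exact hDS.2 this
        · show Fin.castAdd n i₀ ∈ _
          rw [show (Fin.castAdd n i₀ ∈ joinS (pre1 S) D) ↔ i₀ ∈ pre1 (joinS (pre1 S) D)
            from Iff.rfl, pre1_join]
          exact hiS
      refine ⟨?_, minIn_reduced hP2 hmin2, Or.inr hmin2⟩
      -- pre1 S reduced : either minimal, or i₀ is a label
      by_cases hmin1 : MinIn (structPoset f) (pre1 S)
      · exact minIn_reduced hP1 hmin1
      · refine ⟨hP1, Or.inr ?_⟩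
        apply Set.nonempty_iff_ne_empty.mp
        refine ⟨i₀, hiS, ?_⟩
        rintro ⟨C, ⟨hCP, hCS⟩, hiC⟩
        apply hicov
        refine ⟨joinS C (pre2 S), ⟨?_, ?_⟩, ?_⟩
        · exact mem_structPoset_tensor.mpr ⟨by rw [pre1_join]; exact hCP,
            by rw [pre2_join]; exact hP2⟩
        · constructor
          · exact subset_iff_pre.mpr ⟨by rw [pre1_join]; exact hCS.1, by rw [pre2_join]⟩
          · intro hc
            have := (subset_iff_pre.mp hc).1
            rw [pre1_join] at this
            exact hCS.2 this
        · show Fin.castAdd n i₀ ∈ _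
          rw [show (Fin.castAdd n i₀ ∈ joinS C (pre2 S)) ↔ i₀ ∈ pre1 (joinS C (pre2 S))
            from Iff.rfl, pre1_join]
          exact hiC
    · -- label in block 2 : pre1 S minimal (symmetric)
      have hmin1 : MinIn (structPoset f) (pre1 S) := by
        intro D hD hDS
        apply hicov
        refine ⟨joinS D (pre2 S), ⟨?_, ?_⟩, ?_⟩
        · exact mem_structPoset_tensor.mpr ⟨by rw [pre1_join]; exact hD,
            by rw [pre2_join]; exact hP2⟩
        · constructor
          · exact subset_iff_pre.mpr ⟨by rw [pre1_join]; exact hDS.1, by rw [pre2_join]⟩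
          · intro hc
            have := (subset_iff_pre.mp hc).1
            rw [pre1_join] at this
            exact hDS.2 this
        · show Fin.natAdd m i₀ ∈ _
          rw [show (Fin.natAdd m i₀ ∈ joinS D (pre2 S)) ↔ i₀ ∈ pre2 (joinS D (pre2 S))
            from Iff.rfl, pre2_join]
          exact hiS
      refine ⟨minIn_reduced hP1 hmin1, ?_, Or.inl hmin1⟩
      by_cases hmin2 : MinIn (structPoset g) (pre2 S)
      · exact minIn_reduced hP2 hmin2
      · refine ⟨hP2, Or.inr ?_⟩
        apply Set.nonempty_iff_ne_empty.mp
        refine ⟨i₀, hiS, ?_⟩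
        rintro ⟨C, ⟨hCP, hCS⟩, hiC⟩
        apply hicov
        refine ⟨joinS (pre1 S) C, ⟨?_, ?_⟩, ?_⟩
        · exact mem_structPoset_tensor.mpr ⟨by rw [pre1_join]; exact hP1,
            by rw [pre2_join]; exact hCP⟩
        · constructor
          · exact subset_iff_pre.mpr ⟨by rw [pre1_join], by rw [pre2_join]; exact hCS.1⟩
          · intro hc
            have := (subset_iff_pre.mp hc).2
            rw [pre2_join] at this
            exact hCS.2 this
        · show Fin.natAdd m i₀ ∈ _
          rw [show (Fin.natAdd m i₀ ∈ joinS (pre1 S) C) ↔ i₀ ∈ pre2 (joinS (pre1 S) C)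
            from Iff.rfl, pre2_join]
          exact hiC

/-- Part (b): recombination of reduced components, one of which is minimal. -/
lemma tensor_reduced_recombine {X : Set (Fin (m + n))}
    (hXP : X ∈ structPoset (tensor f g))
    (h1 : pre1 X ∈ reducedPoset f) (h2 : pre2 X ∈ reducedPoset g)
    (hmin : MinIn (structPoset f) (pre1 X) ∨ MinIn (structPoset g) (pre2 X)) :
    X ∈ reducedPoset (tensor f g) := by
  by_cases hX0 : X = ∅
  · exact ⟨hXP, Or.inl hX0⟩
  refine ⟨hXP, Or.inr ?_⟩
  apply Set.nonempty_iff_ne_empty.mp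
  rcases hmin with hm1 | hm2
  · -- pre1 X minimal
    by_cases hm2 : MinIn (structPoset g) (pre2 X)
    · -- both minimal: X has no proper subsets in P
      have : MinIn (structPoset (tensor f g)) X := by
        intro Y hY hYX
        obtain ⟨hY1, hY2⟩ := mem_structPoset_tensor.mp hY
        have hs := subset_iff_pre.mp hYX.1
        have hne : pre1 Y ≠ pre1 X ∨ pre2 Y ≠ pre2 X := by
          by_contra hc
          push_neg at hc
          exact hYX.2 (eq_iff_pre.mpr ⟨hc.1, hc.2⟩).ge
        rcases hne with h | h
        · exact hm1 (pre1 Y) hY1 ⟨hs.1, fun hc => h (Set.Subset.antisymm hs.1 hc)⟩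
        · exact hm2 (pre2 Y) hY2 ⟨hs.2, fun hc => h (Set.Subset.antisymm hs.2 hc)⟩
      rw [minIn_labels_eq this]
      exact Set.nonempty_iff_ne_empty.mpr hX0
    · -- pre2 X not minimal: take a label from block 2
      have hX2ne : pre2 X ≠ ∅ := by
        intro hc
        apply hm2
        rw [hc]
        exact empty_minIn _
      obtain ⟨i₀, hi₀⟩ : (labels g (pre2 X)).Nonempty := by
        rcases h2.2 with hc | hc
        · exact absurd hc hX2ne
        · exact Set.nonempty_iff_ne_empty.mpr hc
      refine ⟨Fin.natAdd m i₀, hi₀.1, ?_⟩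
      rintro ⟨Y, ⟨hYP, hYX⟩, hiY⟩
      obtain ⟨hY1, hY2⟩ := mem_structPoset_tensor.mp hYP
      have hs := subset_iff_pre.mp hYX.1
      have hY1eq : pre1 Y = pre1 X := by
        by_contra hne
        exact hm1 (pre1 Y) hY1 ⟨hs.1, fun hc => hne (Set.Subset.antisymm hs.1 hc)⟩
      have hY2lt : pre2 Y ⊂ pre2 X := by
        refine ⟨hs.2, fun hc => hYX.2 (eq_iff_pre.mpr ⟨hY1eq, Set.Subset.antisymm hs.2 hc⟩).ge⟩
      exact hi₀.2 ⟨pre2 Y, ⟨hY2, hY2lt⟩, hiY⟩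
  · -- pre2 X minimal (symmetric)
    by_cases hm1 : MinIn (structPoset f) (pre1 X)
    · have : MinIn (structPoset (tensor f g)) X := by
        intro Y hY hYX
        obtain ⟨hY1, hY2⟩ := mem_structPoset_tensor.mp hY
        have hs := subset_iff_pre.mp hYX.1
        have hne : pre1 Y ≠ pre1 X ∨ pre2 Y ≠ pre2 X := by
          by_contra hc
          push_neg at hc
          exact hYX.2 (eq_iff_pre.mpr ⟨hc.1, hc.2⟩).ge
        rcases hne with h | h
        · exact hm1 (pre1 Y) hY1 ⟨hs.1, fun hc => h (Set.Subset.antisymm hs.1 hc)⟩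
        · exact hm2 (pre2 Y) hY2 ⟨hs.2, fun hc => h (Set.Subset.antisymm hs.2 hc)⟩
      rw [minIn_labels_eq this]
      exact Set.nonempty_iff_ne_empty.mpr hX0
    · have hX1ne : pre1 X ≠ ∅ := by
        intro hc
        apply hm1
        rw [hc]
        exact empty_minIn _
      obtain ⟨i₀, hi₀⟩ : (labels f (pre1 X)).Nonempty := by
        rcases h1.2 with hc | hc
        · exact absurd hc hX1ne
        · exact Set.nonempty_iff_ne_empty.mpr hc
      refine ⟨Fin.castAdd n i₀, hi₀.1, ?_⟩
      rintro ⟨Y, ⟨hYP, hYX⟩, hiY⟩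
      obtain ⟨hY1, hY2⟩ := mem_structPoset_tensor.mp hYP
      have hs := subset_iff_pre.mp hYX.1
      have hY2eq : pre2 Y = pre2 X := by
        by_contra hne
        exact hm2 (pre2 Y) hY2 ⟨hs.2, fun hc => hne (Set.Subset.antisymm hs.2 hc)⟩
      have hY1lt : pre1 Y ⊂ pre1 X := by
        refine ⟨hs.1, fun hc => hYX.2 (eq_iff_pre.mpr ⟨Set.Subset.antisymm hs.1 hc, hY2eq⟩).ge⟩
      exact hi₀.2 ⟨pre1 Y, ⟨hY1, hY1lt⟩, hiY⟩

/-- Part (c): the glb decomposes. -/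
lemma tensor_glb_decompose {S T X : Set (Fin (m + n))}
    (hX : IsGLBIn (structPoset (tensor f g)) S T X) :
    IsGLBIn (structPoset f) (pre1 S) (pre1 T) (pre1 X) ∧
    IsGLBIn (structPoset g) (pre2 S) (pre2 T) (pre2 X) := by
  obtain ⟨hXP, hXS, hXT, hmax⟩ := hX
  obtain ⟨hX1, hX2⟩ := mem_structPoset_tensor.mp hXP
  constructor
  · refine ⟨hX1, (subset_iff_pre.mp hXS).1, (subset_iff_pre.mp hXT).1, ?_⟩
    intro C hC hCS hCT
    have hY : joinS C (pre2 X) ∈ structPoset (tensor f g) :=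
      mem_structPoset_tensor.mpr ⟨by rw [pre1_join]; exact hC, by rw [pre2_join]; exact hX2⟩
    have hYS : joinS C (pre2 X) ⊆ S := subset_iff_pre.mpr
      ⟨by rw [pre1_join]; exact hCS, by rw [pre2_join]; exact (subset_iff_pre.mp hXS).2⟩
    have hYT : joinS C (pre2 X) ⊆ T := subset_iff_pre.mpr
      ⟨by rw [pre1_join]; exact hCT, by rw [pre2_join]; exact (subset_iff_pre.mp hXT).2⟩
    have := (subset_iff_pre.mp (hmax _ hY hYS hYT)).1
    rwa [pre1_join] at this
  · refine ⟨hX2, (subset_iff_pre.mp hXS).2, (subset_iff_pre.mp hXT).2, ?_⟩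
    intro C hC hCS hCT
    have hY : joinS (pre1 X) C ∈ structPoset (tensor f g) :=
      mem_structPoset_tensor.mpr ⟨by rw [pre1_join]; exact hX1, by rw [pre2_join]; exact hC⟩
    have hYS : joinS (pre1 X) C ⊆ S := subset_iff_pre.mpr
      ⟨by rw [pre1_join]; exact (subset_iff_pre.mp hXS).1, by rw [pre2_join]; exact hCS⟩
    have hYT : joinS (pre1 X) C ⊆ T := subset_iff_pre.mpr
      ⟨by rw [pre1_join]; exact (subset_iff_pre.mp hXT).1, by rw [pre2_join]; exact hCT⟩
    have := (subset_iff_pre.mp (hmax _ hY hYS hYT)).2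
    rwa [pre2_join] at this

lemma glbclosed_tensor (IHf : GLBClosed f) (IHg : GLBClosed g) :
    GLBClosed (tensor f g) := by
  intro S T X hS hT hX
  obtain ⟨hS1, hS2, hSmin⟩ := tensor_reduced_decompose hS
  obtain ⟨hT1, hT2, _⟩ := tensor_reduced_decompose hT
  obtain ⟨hglb1, hglb2⟩ := tensor_glb_decompose hX
  have hX1 : pre1 X ∈ reducedPoset f := IHf _ _ _ hS1 hT1 hglb1
  have hX2 : pre2 X ∈ reducedPoset g := IHg _ _ _ hS2 hT2 hglb2
  apply tensor_reduced_recombine hX.1 hX1 hX2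
  rcases hSmin with hm | hm
  · left
    intro C hC hCX
    exact hm C hC (lt_of_lt_of_le hCX hglb1.2.1)
  · right
    intro C hC hCX
    exact hm C hC (lt_of_lt_of_le hCX hglb2.2.1)

end Tensor


lemma isType_theta {n : ℕ} {f : Str n → Bool} (hf : IsType n f) : f (theta n) = true := by
  induction hf with
  | one => rfl
  | dual hf ih => simp [star]
  | perm σ hf ih =>
      have h : permAct σ (theta _) = theta _ := rfl
      simpa [permComp, h] using ih
  | tens hf hg ihf ihg =>
      rename_i m' n' _ _
      have h1 : fstStr (theta (m' + n')) = theta m' := rfl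
      have h2 : sndStr (theta (m' + n')) = theta n' := rfl
      simp [tensor, h1, h2, ihf, ihg]

lemma glbClosed_of_isType {n : ℕ} {f : Str n → Bool} (hf : IsType n f) : GLBClosed f := by
  induction hf with
  | one =>
      intro S T X hS hT hX
      have hXP := hX.1
      have hX0 : X = ∅ := by
        by_contra h
        apply hXP
        rw [mobius_one, if_neg h]
      exact ⟨hXP, Or.inl hX0⟩
  | dual hf ih => exact glbclosed_star (isType_theta hf) ih
  | perm σ hf ih => exact glbclosed_perm σ ih
  | tens hf hg ihf ihg => exact glbclosed_tensor ihf ihg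

/-- if `S, T ∈ 𝓟_f^0` and the greatest lower bound `S∧T` exists in the
poset `(𝓟_f, ⊆)`, then `S∧T ∈ 𝓟_f^0`. -/
theorem stmt18 {n : ℕ} (f : Str n → Bool) (hf : IsType n f)
    (S T X : Set (Fin n)) (hS : S ∈ reducedPoset f) (hT : T ∈ reducedPoset f)
    (hX : IsGLBIn (structPoset f) S T X) :
    X ∈ reducedPoset f :=
  glbClosed_of_isType hf S T X hS hT hX

end HOT
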